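/- arXiv:2506.23948 — 3 statements merged into one kernel-verified Lean document; each statement's English description precedes it below -/
import Mathlib

section
/- Let d ≥ 1 be an integer, let β satisfy 0 < β < 1/2, and let κ ≥ 0. There exists a constant C > 0, depending only on d, β and κ, with the following property: for every unit vector ν ∈ ℝ^d, all points x, y ∈ ℝ^d with x ≠ y satisfying |⟨ν, y − x⟩| ≤ κ‖y − x‖², and all real numbers s < t, the directional derivative in direction ν of the map z ↦ Φ(z,t;y,s) at z = x satisfies |∂_ν Φ(x,t;y,s)| = |(4π(t−s))^{−d/2} · (⟨ν, y−x⟩/(2(t−s))) · exp(−‖x−y‖²/(4(t−s)))| ≤ C (t−s)^{−β} ‖x−y‖^{−(d−2β)}. -/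
open scoped RealInnerProductSpace

/-- The fundamental solution of the heat equation on `ℝ^d`:
`Φ(x,t;y,s) = (4π(t−s))^{−d/2} exp(−‖x−y‖²/(4(t−s)))` for `t > s`, and `0` for `t ≤ s`. -/
noncomputable def Phi (d : ℕ) (x : EuclideanSpace ℝ (Fin d)) (t : ℝ)
    (y : EuclideanSpace ℝ (Fin d)) (s : ℝ) : ℝ :=
  if t ≤ s then 0
  else (4 * Real.pi * (t - s)) ^ (-(d : ℝ) / 2) * Real.exp (-‖x - y‖ ^ 2 / (4 * (t - s)))

/-!
Write `τ = t − s`, `r = ‖x − y‖` and `u = r² / (4τ)`. The flatness condition bounds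
`|∂_ν Φ|` by `(4π)^{−d/2} (κ/2) τ^{−d/2−1} r² e^{−u}`, and the scaling identity
`τ^{−d/2−1} r² = (4u)^a τ^{−β} r^{−(d−2β)}` with `a = d/2 + 1 − β > 0` moves all the
dependence on `u` into `u^a e^{−u}`, which is at most `(a/e)^a`.
-/

open Real

lemma rpow_mul_exp_neg_le {a u : ℝ} (ha : 0 < a) (hu : 0 ≤ u) :
    u ^ a * exp (-u) ≤ (a / exp 1) ^ a := by
  -- `y e^{-y} ≤ e^{-1}` at `y = u / a`
  have hmax : u * exp (-(u / a)) ≤ a * exp (-1) := by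
    calc u * exp (-(u / a)) = a * (u / a * exp (-(u / a))) := by field_simp
      _ ≤ a * exp (-1) := mul_le_mul_of_nonneg_left (mul_exp_neg_le_exp_neg_one _) ha.le
  calc u ^ a * exp (-u) = (u * exp (-(u / a))) ^ a := by
        rw [mul_rpow hu (exp_pos _).le, ← exp_mul]; field_simp
    _ ≤ (a * exp (-1)) ^ a := rpow_le_rpow (by positivity) hmax ha.le
    _ = (a / exp 1) ^ a := by rw [exp_neg, div_eq_mul_inv]

lemma rpow_neg_half_mul_sq_div_eq {τ r : ℝ} (hτ : 0 < τ) (hr : 0 < r) (D β : ℝ) :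
    τ ^ (-D / 2) * r ^ 2 / τ = (r ^ 2 / τ) ^ (D / 2 + 1 - β) * τ ^ (-β) * r ^ (-(D - 2 * β)) := by
  -- all factors are positive: write each as `exp (log _ * _)` and compare exponents
  have hr2 : r ^ 2 = exp (log r * 2) := by rw [← rpow_def_of_pos hr]; norm_cast
  rw [rpow_def_of_pos hτ, rpow_def_of_pos hτ, rpow_def_of_pos hr,
    rpow_def_of_pos (by positivity), log_div (by positivity) hτ.ne', log_pow, hr2,
    div_eq_mul_inv, ← exp_log hτ, ← exp_neg, log_exp]
  simp only [← exp_add, exp_eq_exp]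
  push_cast
  ring

lemma abs_heat_normal_deriv_le {D β κ τ r p : ℝ} (hβ : β < D / 2 + 1) (hτ : 0 < τ) (hr : 0 < r)
    (hp : |p| ≤ κ * r ^ 2) :
    |(4 * π * τ) ^ (-D / 2) * (p / (2 * τ)) * exp (-r ^ 2 / (4 * τ))| ≤
      (4 * π) ^ (-D / 2) * (κ / 2) * (4 * (D / 2 + 1 - β) / exp 1) ^ (D / 2 + 1 - β) *
        τ ^ (-β) * r ^ (-(D - 2 * β)) := by
  have ha : 0 < D / 2 + 1 - β := by linarith
  have hκ : 0 ≤ κ := nonneg_of_mul_nonneg_left ((abs_nonneg p).trans hp) (by positivity)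
  rw [neg_div (4 * τ)]
  set a := D / 2 + 1 - β
  set u := r ^ 2 / (4 * τ)
  have hu : 0 ≤ u := by positivity
  have h4u : (r ^ 2 / τ) ^ a = 4 ^ a * u ^ a := by
    rw [← mul_rpow (by norm_num) hu]; congr 1; simp only [u]; field_simp
  calc |(4 * π * τ) ^ (-D / 2) * (p / (2 * τ)) * exp (-u)|
      = (4 * π) ^ (-D / 2) * (|p| / 2) * (τ ^ (-D / 2) / τ) * exp (-u) := by
        rw [abs_mul, abs_mul, abs_div, abs_of_pos (exp_pos _),
          abs_of_pos (by positivity : 0 < 2 * τ), abs_of_pos (by positivity),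
          mul_rpow (by positivity) hτ.le]
        ring
    _ ≤ (4 * π) ^ (-D / 2) * (κ * r ^ 2 / 2) * (τ ^ (-D / 2) / τ) * exp (-u) := by gcongr
    _ = (4 * π) ^ (-D / 2) * (κ / 2) * (τ ^ (-D / 2) * r ^ 2 / τ) * exp (-u) := by ring
    _ = (4 * π) ^ (-D / 2) * (κ / 2) * 4 ^ a * (u ^ a * exp (-u)) *
          (τ ^ (-β) * r ^ (-(D - 2 * β))) := by
        rw [rpow_neg_half_mul_sq_div_eq hτ hr D β, h4u]; ring
    _ ≤ (4 * π) ^ (-D / 2) * (κ / 2) * 4 ^ a * (a / exp 1) ^ a *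
          (τ ^ (-β) * r ^ (-(D - 2 * β))) := by gcongr; exact rpow_mul_exp_neg_le ha hu
    _ = _ := by
        rw [mul_div_assoc, mul_rpow (by norm_num) (by positivity : 0 ≤ a / exp 1)]; ring

lemma fderiv_Phi_apply (d : ℕ) (x y ν : EuclideanSpace ℝ (Fin d)) {s t : ℝ} (hst : s < t) :
    fderiv ℝ (fun z => Phi d z t y s) x ν =
      (4 * π * (t - s)) ^ (-(d : ℝ) / 2) * (⟪ν, y - x⟫ / (2 * (t - s))) *
        exp (-‖x - y‖ ^ 2 / (4 * (t - s))) := by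
  set c := (4 * π * (t - s)) ^ (-(d : ℝ) / 2)
  have hPhi : (fun z => Phi d z t y s) = fun z => c * exp (-(4 * (t - s))⁻¹ * ‖z - y‖ ^ 2) := by
    funext z
    rw [Phi, if_neg (not_le.mpr hst)]
    congr 2
    ring
  have hsq : HasFDerivAt (fun z : EuclideanSpace ℝ (Fin d) => ‖z - y‖ ^ 2)
      (2 • innerSL ℝ (x - y)) x := by
    simpa using ((hasFDerivAt_id x).sub_const y).norm_sq
  rw [hPhi, ((hsq.const_mul _).exp.const_mul c).fderiv]
  simp only [smul_apply, innerSL_apply_apply, smul_eq_mul]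
  rw [← neg_sub x y, inner_neg_right, real_inner_comm]
  field_simp
  ring

theorem heat_kernel_normal_derivative_bound_general (d : ℕ) (β κ : ℝ)
    (hβ : β < 1 / 2) (hκ : 0 ≤ κ) :
    ∃ C : ℝ, 0 < C ∧ ∀ (ν x y : EuclideanSpace ℝ (Fin d)), ‖ν‖ = 1 → x ≠ y →
      |⟪ν, y - x⟫| ≤ κ * ‖y - x‖ ^ 2 → ∀ s t : ℝ, s < t →
      |fderiv ℝ (fun z => Phi d z t y s) x ν| =
        |(4 * Real.pi * (t - s)) ^ (-(d : ℝ) / 2) * (⟪ν, y - x⟫ / (2 * (t - s))) *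
          Real.exp (-‖x - y‖ ^ 2 / (4 * (t - s)))| ∧
      |(4 * Real.pi * (t - s)) ^ (-(d : ℝ) / 2) * (⟪ν, y - x⟫ / (2 * (t - s))) *
          Real.exp (-‖x - y‖ ^ 2 / (4 * (t - s)))| ≤
        C * (t - s) ^ (-β) * ‖x - y‖ ^ (-((d : ℝ) - 2 * β)) := by
  have hβd : β < (d : ℝ) / 2 + 1 := by linarith [(d.cast_nonneg : (0 : ℝ) ≤ d)]
  set a := (d : ℝ) / 2 + 1 - β
  have ha : 0 < a := sub_pos.mpr hβd
  set K := (4 * π) ^ (-(d : ℝ) / 2) * (κ / 2) * (4 * a / exp 1) ^ a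
  have hK : 0 ≤ K := by positivity
  refine ⟨K + 1, by positivity, fun ν x y _ hxy hflat s t hst => ?_⟩
  rw [fderiv_Phi_apply d x y ν hst]
  refine ⟨rfl, ?_⟩
  have hτ : 0 < t - s := sub_pos.mpr hst
  have hr : 0 < ‖x - y‖ := norm_pos_iff.mpr (sub_ne_zero.mpr hxy)
  calc _ ≤ K * (t - s) ^ (-β) * ‖x - y‖ ^ (-((d : ℝ) - 2 * β)) :=
        abs_heat_normal_deriv_le hβd hτ hr (by rwa [norm_sub_rev])
    _ ≤ (K + 1) * (t - s) ^ (-β) * ‖x - y‖ ^ (-((d : ℝ) - 2 * β)) := by gcongr; linarith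

/-- Estimate (E2): for a unit vector `ν` with the flatness property
`|⟨ν, y−x⟩| ≤ κ‖y−x‖²`, the directional derivative of `Φ(·,t;y,s)` at `x` in direction `ν`
equals the explicit formula and is bounded by `C (t−s)^{−β} ‖x−y‖^{−(d−2β)}`. -/
theorem heat_kernel_normal_derivative_bound (d : ℕ) (hd : 1 ≤ d) (β κ : ℝ)
    (hβ0 : 0 < β) (hβ : β < 1 / 2) (hκ : 0 ≤ κ) :
    ∃ C : ℝ, 0 < C ∧ ∀ (ν x y : EuclideanSpace ℝ (Fin d)), ‖ν‖ = 1 → x ≠ y →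
      |⟪ν, y - x⟫| ≤ κ * ‖y - x‖ ^ 2 → ∀ s t : ℝ, s < t →
      |fderiv ℝ (fun z => Phi d z t y s) x ν| =
        |(4 * Real.pi * (t - s)) ^ (-(d : ℝ) / 2) * (⟪ν, y - x⟫ / (2 * (t - s))) *
          Real.exp (-‖x - y‖ ^ 2 / (4 * (t - s)))| ∧
      |(4 * Real.pi * (t - s)) ^ (-(d : ℝ) / 2) * (⟪ν, y - x⟫ / (2 * (t - s))) *
          Real.exp (-‖x - y‖ ^ 2 / (4 * (t - s)))| ≤
        C * (t - s) ^ (-β) * ‖x - y‖ ^ (-((d : ℝ) - 2 * β)) :=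
  heat_kernel_normal_derivative_bound_general d β κ hβ hκ
end

section
/- Let d ≥ 1 be an integer and let β satisfy 0 < β < 1/2. There exists a constant C > 0, depending only on d and β, with the following property: for every finite Borel measure σ on ℝ^d with compact support Γ, every bounded continuous φ : ℝ^d × ℝ → ℝ with |φ| ≤ M everywhere, every x ∈ ℝ^d with δ := dist(x, Γ) > 0, and every t > 0, the single-layer heat potential v(x,t) := ∫_0^t ∫ Φ(x,t;y,s) φ(y,s) dσ(y) ds satisfies |v(x,t)| ≤ C · M · σ(ℝ^d) · t^{1−β} · δ^{−(d−2β)}. -/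
open MeasureTheory

/-- The single-layer heat potential `v(x,t) = ∫_0^t ∫ Φ(x,t;y,s) φ(y,s) dσ(y) ds`. -/
noncomputable def singleLayer (d : ℕ) (σ : Measure (EuclideanSpace ℝ (Fin d)))
    (φ : EuclideanSpace ℝ (Fin d) → ℝ → ℝ)
    (x : EuclideanSpace ℝ (Fin d)) (t : ℝ) : ℝ :=
  ∫ s in Set.Ioc 0 t, ∫ y, Phi d x t y s * φ y s ∂σ

/-!
Trading part of the Gaussian factor for powers, `exp (-z) ≤ α ^ α z ^ (-α)` with
`α = d/2 - β` gives `Φ(x,t;y,s) ≤ K (t-s)^{-β} ‖x-y‖^{-(d-2β)}`. On the support of `σ` we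
have `‖x-y‖ ≥ δ`, so the inner integral is at most `K M σ(ℝ^d) δ^{-(d-2β)} (t-s)^{-β}`, and
`(t-s)^{-β}` is integrable on `(0,t)` with integral `t^{1-β}/(1-β)` since `β < 1`.
-/

open Real Set Metric

theorem exp_neg_le_rpow_mul_rpow_neg {α z : ℝ} (hα : 0 < α) (hz : 0 < z) :
    exp (-z) ≤ α ^ α * z ^ (-α) := by
  have key : (z / α) ^ α ≤ exp z :=
    calc (z / α) ^ α ≤ exp (z / α) ^ α :=
          rpow_le_rpow (by positivity)
            ((le_add_of_nonneg_right zero_le_one).trans (add_one_le_exp _)) hα.le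
      _ = exp z := by rw [← exp_mul, div_mul_cancel₀ _ hα.ne']
  calc exp (-z) = (exp z)⁻¹ := exp_neg z
    _ ≤ ((z / α) ^ α)⁻¹ := inv_anti₀ (by positivity) key
    _ = α ^ α * z ^ (-α) := by
      rw [div_rpow hz.le hα.le, rpow_neg hz.le]
      field_simp

theorem exp_neg_sq_div_le {α τ r : ℝ} (hα : 0 < α) (hτ : 0 < τ) (hr : 0 < r) :
    exp (-r ^ 2 / (4 * τ)) ≤ (4 * α) ^ α * τ ^ α * r ^ (-(2 * α)) := by
  rw [neg_div]
  refine (exp_neg_le_rpow_mul_rpow_neg hα (by positivity : 0 < r ^ 2 / (4 * τ))).trans_eq ?_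
  rw [div_rpow (by positivity) (by positivity), ← rpow_natCast_mul hr.le,
    rpow_neg (by positivity : (0 : ℝ) ≤ 4 * τ), div_inv_eq_mul, mul_rpow (by norm_num) hτ.le,
    mul_rpow (by norm_num) hα.le]
  push_cast
  ring_nf

noncomputable def heatDecayConst (d : ℕ) (β : ℝ) : ℝ :=
  (4 * π) ^ (-(d : ℝ) / 2) * (4 * ((d : ℝ) / 2 - β)) ^ ((d : ℝ) / 2 - β)

theorem heatDecayConst_pos {d : ℕ} {β : ℝ} (hβ : β < d / 2) : 0 < heatDecayConst d β := by
  have : 0 < 4 * ((d : ℝ) / 2 - β) := by linarith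
  unfold heatDecayConst
  positivity

theorem Phi_nonneg (d : ℕ) (x : EuclideanSpace ℝ (Fin d)) (t : ℝ)
    (y : EuclideanSpace ℝ (Fin d)) (s : ℝ) : 0 ≤ Phi d x t y s := by
  unfold Phi
  split_ifs with hts
  · exact le_rfl
  · have : 0 < t - s := sub_pos.mpr (not_le.mp hts)
    positivity

theorem Phi_le {d : ℕ} {β : ℝ} (hβ : β < d / 2) {x y : EuclideanSpace ℝ (Fin d)} (hxy : x ≠ y)
    {s t : ℝ} (hst : s < t) :
    Phi d x t y s ≤ heatDecayConst d β * (t - s) ^ (-β) * ‖x - y‖ ^ (-((d : ℝ) - 2 * β)) := by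
  set α : ℝ := (d : ℝ) / 2 - β with hα_def
  have hα : 0 < α := by rw [hα_def]; linarith
  have hτ : 0 < t - s := sub_pos.mpr hst
  have hr : 0 < ‖x - y‖ := norm_pos_iff.mpr (sub_ne_zero.mpr hxy)
  rw [Phi, if_neg hst.not_ge]
  calc (4 * π * (t - s)) ^ (-(d : ℝ) / 2) * exp (-‖x - y‖ ^ 2 / (4 * (t - s)))
      ≤ (4 * π * (t - s)) ^ (-(d : ℝ) / 2) *
          ((4 * α) ^ α * (t - s) ^ α * ‖x - y‖ ^ (-(2 * α))) := by
        gcongr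
        exact exp_neg_sq_div_le hα hτ hr
    _ = heatDecayConst d β * ((t - s) ^ (-(d : ℝ) / 2) * (t - s) ^ α) * ‖x - y‖ ^ (-(2 * α)) := by
        rw [heatDecayConst, mul_rpow (by positivity) hτ.le]
        ring
    _ = heatDecayConst d β * (t - s) ^ (-β) * ‖x - y‖ ^ (-((d : ℝ) - 2 * β)) := by
        rw [← rpow_add hτ, show -(d : ℝ) / 2 + α = -β by ring,
          show -(2 * α) = -((d : ℝ) - 2 * β) by ring]

theorem norm_integral_Phi_mul_le {d : ℕ} {β : ℝ} (hβ : β < d / 2)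
    {σ : Measure (EuclideanSpace ℝ (Fin d))} [IsFiniteMeasure σ]
    {Γ : Set (EuclideanSpace ℝ (Fin d))}
    (hσΓ : σ Γᶜ = 0) {φ : EuclideanSpace ℝ (Fin d) → ℝ → ℝ} {M : ℝ} (hM : ∀ y s, |φ y s| ≤ M)
    {x : EuclideanSpace ℝ (Fin d)} (hδ : 0 < infDist x Γ) {s t : ℝ} (hst : s < t) :
    ‖∫ y, Phi d x t y s * φ y s ∂σ‖ ≤
      heatDecayConst d β * M * σ.real univ * infDist x Γ ^ (-((d : ℝ) - 2 * β)) *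
        (t - s) ^ (-β) := by
  have hK := heatDecayConst_pos hβ
  refine (norm_integral_le_of_norm_le_const (C := heatDecayConst d β * (t - s) ^ (-β) *
    infDist x Γ ^ (-((d : ℝ) - 2 * β)) * M) ?_).trans_eq (by ring)
  filter_upwards [mem_ae_iff.mpr hσΓ] with y hy
  have hδy : infDist x Γ ≤ ‖x - y‖ := dist_eq_norm x y ▸ infDist_le_dist_of_mem hy
  have hxy : x ≠ y := by
    rintro rfl
    rw [sub_self, norm_zero] at hδy
    linarith
  rw [norm_mul, Real.norm_eq_abs, Real.norm_eq_abs, abs_of_nonneg (Phi_nonneg ..)]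
  refine mul_le_mul ((Phi_le hβ hxy hst).trans ?_) (hM y s) (abs_nonneg _) (by positivity)
  exact mul_le_mul_of_nonneg_left (rpow_le_rpow_of_nonpos hδ hδy (by linarith)) (by positivity)

theorem integral_Ioo_sub_rpow_neg {β t : ℝ} (hβ : β < 1) (ht : 0 < t) :
    ∫ s in Ioo 0 t, (t - s) ^ (-β) = t ^ (1 - β) / (1 - β) := by
  rw [← integral_Ioc_eq_integral_Ioo, ← intervalIntegral.integral_of_le ht.le,
    intervalIntegral.integral_comp_sub_left (fun u : ℝ => u ^ (-β)), sub_self, sub_zero,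
    integral_rpow (Or.inl (by linarith)), zero_rpow (by linarith), sub_zero, neg_add_eq_sub]

theorem integrableOn_Ioo_sub_rpow_neg {β t : ℝ} (hβ : β < 1) (ht : 0 < t) :
    IntegrableOn (fun s => (t - s) ^ (-β)) (Ioo 0 t) := by
  have h := (intervalIntegral.intervalIntegrable_rpow' (a := 0) (b := t)
    (by linarith : -1 < -β)).comp_sub_left t
  rw [sub_self, sub_zero] at h
  exact ((intervalIntegrable_iff_integrableOn_Ioc_of_le ht.le).mp h.symm).mono_set
    Ioo_subset_Ioc_self

theorem norm_integral_Ioc_le_of_norm_le_mul_sub_rpow {E : Type*} [NormedAddCommGroup E]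
    [NormedSpace ℝ E] {F : ℝ → E} {A β t : ℝ} (hβ : β < 1) (ht : 0 < t)
    (hF : ∀ s ∈ Ioo 0 t, ‖F s‖ ≤ A * (t - s) ^ (-β)) :
    ‖∫ s in Ioc 0 t, F s‖ ≤ A * (t ^ (1 - β) / (1 - β)) := by
  rw [integral_Ioc_eq_integral_Ioo]
  calc ‖∫ s in Ioo 0 t, F s‖ ≤ ∫ s in Ioo 0 t, A * (t - s) ^ (-β) :=
        norm_integral_le_of_norm_le ((integrableOn_Ioo_sub_rpow_neg hβ ht).const_mul A)
          (ae_restrict_of_forall_mem measurableSet_Ioo hF)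
    _ = A * (t ^ (1 - β) / (1 - β)) := by
        rw [integral_const_mul, integral_Ioo_sub_rpow_neg hβ ht]

theorem singleLayer_pointwise_bound_general (d : ℕ) (hd : 1 ≤ d) (β : ℝ)
    (hβ : β < 1 / 2) :
    ∃ C : ℝ, 0 < C ∧
      ∀ (σ : Measure (EuclideanSpace ℝ (Fin d))) (_ : IsFiniteMeasure σ)
        (Γ : Set (EuclideanSpace ℝ (Fin d))), IsCompact Γ → σ Γᶜ = 0 →
        ∀ (φ : EuclideanSpace ℝ (Fin d) → ℝ → ℝ),
          (Continuous fun p : EuclideanSpace ℝ (Fin d) × ℝ => φ p.1 p.2) →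
          ∀ M : ℝ, (∀ y s, |φ y s| ≤ M) →
          ∀ x : EuclideanSpace ℝ (Fin d), 0 < Metric.infDist x Γ →
          ∀ t : ℝ, 0 < t →
            |singleLayer d σ φ x t| ≤
              C * M * (σ Set.univ).toReal * t ^ (1 - β) *
                (Metric.infDist x Γ) ^ (-((d : ℝ) - 2 * β)) := by
  have hβd : β < d / 2 := by
    have : (1 : ℝ) ≤ d := by exact_mod_cast hd
    linarith
  refine ⟨heatDecayConst d β / (1 - β), div_pos (heatDecayConst_pos hβd) (by linarith), ?_⟩
  intro σ _ Γ _ hσΓ φ _ M hM x hδ t ht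
  rw [← Real.norm_eq_abs]
  refine (norm_integral_Ioc_le_of_norm_le_mul_sub_rpow (by linarith) ht
    fun s hs => norm_integral_Phi_mul_le hβd hσΓ hM hδ hs.2).trans_eq ?_
  rw [measureReal_def]
  ring

/-- Pointwise decay bound for the single-layer potential:
`|v(x,t)| ≤ C M σ(ℝ^d) t^{1−β} δ^{−(d−2β)}` with `δ = dist(x, Γ)`. -/
theorem singleLayer_pointwise_bound (d : ℕ) (hd : 1 ≤ d) (β : ℝ)
    (hβ0 : 0 < β) (hβ : β < 1 / 2) :
    ∃ C : ℝ, 0 < C ∧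
      ∀ (σ : Measure (EuclideanSpace ℝ (Fin d))) (_ : IsFiniteMeasure σ)
        (Γ : Set (EuclideanSpace ℝ (Fin d))), IsCompact Γ → σ Γᶜ = 0 →
        ∀ (φ : EuclideanSpace ℝ (Fin d) → ℝ → ℝ),
          (Continuous fun p : EuclideanSpace ℝ (Fin d) × ℝ => φ p.1 p.2) →
          ∀ M : ℝ, (∀ y s, |φ y s| ≤ M) →
          ∀ x : EuclideanSpace ℝ (Fin d), 0 < Metric.infDist x Γ →
          ∀ t : ℝ, 0 < t →
            |singleLayer d σ φ x t| ≤
              C * M * (σ Set.univ).toReal * t ^ (1 - β) *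
                (Metric.infDist x Γ) ^ (-((d : ℝ) - 2 * β)) :=
  singleLayer_pointwise_bound_general d hd β hβ
end

section
/- Let d ≥ 1 be an integer, let V ⊆ ℝ^d be a nonempty open convex set, and let ρ > 0 and C ≥ 0. Suppose f : ℝ^d → ℝ is infinitely differentiable on V and that for every y ∈ V and every q ∈ ℕ the operator norm of the q-th iterated Fréchet derivative of f at y satisfies ‖D^q f(y)‖ ≤ C · q! · ρ^{−q}. Then there exists a function g : ℝ^d → ℝ that is analytic on the open set V_ρ := { x ∈ ℝ^d : dist(x, V) < ρ } (in Mathlib terms, AnalyticOnNhd ℝ g V_ρ) and satisfies g = f on V. In particular, f admits an analytic extension into the ρ-neighborhood of V. -/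
open Set Metric Filter

/-- Core of Lemma 2.1 (Potthast): if `f` is smooth on a nonempty open convex set `V`
with iterated Fréchet derivatives bounded by `‖D^q f(y)‖ ≤ C q! ρ^{−q}` on `V`,
then `f` admits an analytic extension to the `ρ`-neighborhood of `V`. -/
theorem analytic_extension_of_derivative_bounds (d : ℕ) (hd : 1 ≤ d)
    (V : Set (EuclideanSpace ℝ (Fin d))) (hVopen : IsOpen V) (hVconv : Convex ℝ V)
    (hVne : V.Nonempty) (ρ C : ℝ) (hρ : 0 < ρ) (hC : 0 ≤ C)
    (f : EuclideanSpace ℝ (Fin d) → ℝ) (hf : ContDiffOn ℝ (⊤ : ℕ∞) f V)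
    (hbound : ∀ y ∈ V, ∀ q : ℕ, ‖iteratedFDeriv ℝ q f y‖ ≤ C * q.factorial / ρ ^ q) :
    ∃ g : EuclideanSpace ℝ (Fin d) → ℝ,
      AnalyticOnNhd ℝ g {x | Metric.infDist x V < ρ} ∧ Set.EqOn g f V := by
  classical
  -- the Taylor series of `f` at `y`
  set p : EuclideanSpace ℝ (Fin d) → FormalMultilinearSeries ℝ (EuclideanSpace ℝ (Fin d)) ℝ :=
    fun y q => (q.factorial : ℝ)⁻¹ • iteratedFDeriv ℝ q f y with hp
  -- radius bound
  have hrad : ∀ y ∈ V, ENNReal.ofReal ρ ≤ (p y).radius := by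
    intro y hy
    show ((ρ.toNNReal : NNReal) : ENNReal) ≤ (p y).radius
    apply FormalMultilinearSeries.le_radius_of_bound (C := C)
    intro n
    have hfac : (0:ℝ) < (n.factorial : ℝ) := by positivity
    have hnorm : ‖p y n‖ = (n.factorial : ℝ)⁻¹ * ‖iteratedFDeriv ℝ n f y‖ := by
      show ‖(n.factorial : ℝ)⁻¹ • iteratedFDeriv ℝ n f y‖ = _
      rw [norm_smul, Real.norm_eq_abs, abs_of_pos (inv_pos.mpr hfac)]
    have key : ‖p y n‖ ≤ C / ρ ^ n := by
      rw [hnorm]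
      calc (n.factorial : ℝ)⁻¹ * ‖iteratedFDeriv ℝ n f y‖
          ≤ (n.factorial : ℝ)⁻¹ * (C * n.factorial / ρ ^ n) := by
            gcongr
            exact hbound y hy n
        _ = C / ρ ^ n := by field_simp
    have hρn : (0:ℝ) < ρ ^ n := by positivity
    rw [Real.coe_toNNReal _ hρ.le]
    calc ‖p y n‖ * ρ ^ n ≤ (C / ρ ^ n) * ρ ^ n := by gcongr
      _ = C := by
          field_simp
  -- the local extensions
  set g : EuclideanSpace ℝ (Fin d) → EuclideanSpace ℝ (Fin d) → ℝ := fun y x => (p y).sum (x - y) with hg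
  have hball : ∀ y ∈ V, HasFPowerSeriesOnBall (g y) (p y) y (ENNReal.ofReal ρ) := by
    intro y hy
    refine ⟨hrad y hy, ENNReal.ofReal_pos.mpr hρ, ?_⟩
    intro z hz
    have h1 : g y (y + z) = (p y).sum z := by simp [hg]
    rw [h1]
    exact (p y).hasSum (lt_of_lt_of_le hz (hrad y hy))
  -- f is analytic on V
  have hAn : AnalyticOnNhd ℝ f V := by
    intro y hy
    obtain ⟨r, hr0, hrV⟩ := Metric.isOpen_iff.mp hVopen y hy
    have hev : f =ᶠ[nhds y] g y := by
      filter_upwards [Metric.ball_mem_nhds y (lt_min hr0 hρ)] with x hx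
      rw [Metric.mem_ball, lt_min_iff] at hx
      set h : EuclideanSpace ℝ (Fin d) := x - y with hh
      have hnh : ‖h‖ < ρ := by rw [hh, ← dist_eq_norm]; exact hx.2
      set L : ℝ →L[ℝ] EuclideanSpace ℝ (Fin d) := (ContinuousLinearMap.id ℝ ℝ).smulRight h with hL
      set F : EuclideanSpace ℝ (Fin d) → ℝ := fun z => f (z + y) with hF
      set V' : Set (EuclideanSpace ℝ (Fin d)) := (fun z => z + y) ⁻¹' V with hV'
      have hV'o : IsOpen V' := hVopen.preimage (continuous_id.add continuous_const)
      have hFs : ContDiffOn ℝ (⊤ : ℕ∞) F V' :=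
        hf.comp (contDiff_id.add contDiff_const).contDiffOn (fun z hz => hz)
      set U : Set ℝ := L ⁻¹' V' with hU
      have hUo : IsOpen U := hV'o.preimage L.continuous
      set φ : ℝ → ℝ := F ∘ L with hφ
      have hφs : ContDiffOn ℝ (⊤ : ℕ∞) φ U := hFs.comp L.contDiff.contDiffOn (fun t ht => ht)
      have hIcc : Set.Icc (0:ℝ) 1 ⊆ U := by
        intro t ht
        show L t + y ∈ V
        apply hrV
        rw [Metric.mem_ball, dist_eq_norm]
        have : L t + y - y = t • h := by simp [hL]
        rw [this, norm_smul, Real.norm_eq_abs, abs_of_nonneg ht.1]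
        calc t * ‖h‖ ≤ 1 * ‖h‖ := by gcongr; exact ht.2
          _ < r := by rw [one_mul, hh, ← dist_eq_norm]; exact hx.1
      have hder : ∀ t ∈ U, ∀ k : ℕ,
          iteratedDeriv k φ t = iteratedFDeriv ℝ k f (t • h + y) (fun _ => h) := by
        intro t ht k
        have h1 := ContinuousLinearMap.iteratedFDerivWithin_comp_right L hFs hV'o.uniqueDiffOn
          hUo.uniqueDiffOn ht (i := k) (by exact_mod_cast le_top)
        rw [iteratedFDerivWithin_of_isOpen k hUo ht, iteratedFDerivWithin_of_isOpen k hV'o ht] at h1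
        rw [iteratedDeriv_eq_iteratedFDeriv, hφ, h1, hF, iteratedFDeriv_comp_add_right]
        simp [hL]
      have hbd : ∀ t ∈ U, ∀ k : ℕ, |iteratedDeriv k φ t| ≤ C * k.factorial / ρ ^ k * ‖h‖ ^ k := by
        intro t ht k
        rw [hder t ht k, ← Real.norm_eq_abs]
        refine ((iteratedFDeriv ℝ k f (t • h + y)).le_opNorm _).trans ?_
        rw [Finset.prod_const, Finset.card_univ, Fintype.card_fin]
        gcongr
        apply hbound
        have ht' : L t + y ∈ V := ht
        simpa [hL] using ht'
      have hU1 : ∀ t ∈ Set.uIcc (0:ℝ) 1, ContDiffAt ℝ (⊤ : ℕ∞) φ t := fun t ht =>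
        hφs.contDiffAt (hUo.mem_nhds (hIcc (by rwa [Set.uIcc_of_le zero_le_one] at ht)))
      have hrem : ∀ n : ℕ, |f x - ∑ k ∈ Finset.range (n+1), p y k (fun _ => h)|
          ≤ C * (‖h‖ / ρ) ^ (n+1) := by
        intro n
        have hcd : ContDiffOn ℝ (n+1) φ (Set.uIcc 0 1) :=
          (hφs.mono (by rw [Set.uIcc_of_le zero_le_one]; exact hIcc)).of_le (by exact_mod_cast le_top)
        obtain ⟨t, ht, hT⟩ :=
          taylor_mean_remainder_lagrange_iteratedDeriv (x₀ := 0) (x := 1) zero_ne_one hcd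
        have hφ1 : φ 1 = f x := by simp [hφ, hF, hL, hh]
        have hsum : taylorWithinEval φ n (Set.uIcc 0 1) 0 1
            = ∑ k ∈ Finset.range (n+1), p y k (fun _ => h) := by
          rw [taylor_within_apply]
          refine Finset.sum_congr rfl (fun k _ => ?_)
          rw [iteratedDerivWithin_eq_iteratedFDerivWithin,
            iteratedFDerivWithin_eq_iteratedFDeriv (uniqueDiffOn_uIcc zero_ne_one)
              ((hU1 0 Set.left_mem_uIcc).of_le (by exact_mod_cast le_top)) Set.left_mem_uIcc,
            ← iteratedDeriv_eq_iteratedFDeriv, hder 0 (hIcc ⟨le_rfl, zero_le_one⟩) k]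
          simp [hp]
        rw [← hφ1, ← hsum, hT]
        have htU : t ∈ U := hIcc (by
          rw [Set.uIoo_of_le zero_le_one] at ht; exact ⟨ht.1.le, ht.2.le⟩)
        have hb := hbd t htU (n+1)
        rw [sub_zero, one_pow, mul_one, abs_div, Nat.abs_cast]
        rw [div_le_iff₀ (by positivity)]
        calc |iteratedDeriv (n+1) φ t| ≤ C * (n+1).factorial / ρ^(n+1) * ‖h‖^(n+1) := hb
          _ = C * (‖h‖ / ρ) ^ (n + 1) * (n+1).factorial := by rw [div_pow]; field_simp
      have hlim : Tendsto (fun n => ∑ k ∈ Finset.range (n+1), p y k (fun _ => h)) atTop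
          (nhds (f x)) := by
        have hq : Tendsto (fun n : ℕ => C * (‖h‖ / ρ) ^ (n+1)) atTop (nhds 0) := by
          have h0 : Tendsto (fun n : ℕ => (‖h‖ / ρ) ^ n) atTop (nhds 0) :=
            tendsto_pow_atTop_nhds_zero_of_lt_one (by positivity) ((div_lt_one hρ).mpr hnh)
          simpa using (h0.comp (tendsto_add_atTop_nat 1)).const_mul C
        rw [tendsto_iff_norm_sub_tendsto_zero]
        refine squeeze_zero (fun n => norm_nonneg _) (fun n => ?_) hq
        rw [Real.norm_eq_abs, abs_sub_comm]; exact hrem n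
      have hhr : h ∈ Metric.eball (0 : EuclideanSpace ℝ (Fin d)) (p y).radius := by
        rw [EMetric.mem_ball, edist_dist, dist_zero_right]
        exact lt_of_lt_of_le ((ENNReal.ofReal_lt_ofReal_iff hρ).mpr hnh) (hrad y hy)
      have hs := ((p y).hasSum hhr).tendsto_sum_nat
      have := tendsto_nhds_unique hlim (hs.comp (tendsto_add_atTop_nat 1))
      show f x = (p y).sum (x - y)
      exact this
    exact ((hball y hy).analyticAt).congr hev.symm
  -- local agreement near each y ∈ V
  have hloc : ∀ y ∈ V, f =ᶠ[nhds y] g y := by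
    intro y hy
    obtain ⟨q, hq⟩ := hAn y hy
    obtain ⟨r, hq⟩ := hq
    have hr' : 0 < min r (ENNReal.ofReal ρ) := lt_min hq.r_pos (ENNReal.ofReal_pos.mpr hρ)
    filter_upwards [EMetric.ball_mem_nhds y hr'] with x hx
    rw [EMetric.mem_ball, lt_min_iff] at hx
    have hz0 : edist (x - y) (0:EuclideanSpace ℝ (Fin d)) = edist x y := by
      simp [edist_dist, dist_eq_norm]
    have hz1 : x - y ∈ Metric.eball (0:EuclideanSpace ℝ (Fin d)) r := by
      rw [EMetric.mem_ball, hz0]; exact hx.1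
    have hz2 : x - y ∈ Metric.eball (0:EuclideanSpace ℝ (Fin d)) (p y).radius := by
      rw [EMetric.mem_ball, hz0]; exact lt_of_lt_of_le hx.2 (hrad y hy)
    have h1 := hq.hasSum_iteratedFDeriv hz1
    have h2 := (p y).hasSum hz2
    have h2' : HasSum (fun n => (n.factorial : ℝ)⁻¹ •
        iteratedFDeriv ℝ n f y (fun _ => x - y)) ((p y).sum (x - y)) := by
      convert h2 using 2 with n
      · rfl
      · rfl
    have := h1.unique h2'
    simpa [hg] using this
  -- g y agrees with f on V ∩ ball y ρ (identity theorem)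
  have hCC : ∀ y ∈ V, EqOn (g y) f (V ∩ ball y ρ) := by
    intro y hy
    have hOopen : IsOpen (V ∩ ball y ρ) := hVopen.inter isOpen_ball
    have hOconv : Convex ℝ (V ∩ ball y ρ) := hVconv.inter (convex_ball y ρ)
    have hyO : y ∈ V ∩ ball y ρ := ⟨hy, mem_ball_self hρ⟩
    have h1 : AnalyticOnNhd ℝ (g y) (V ∩ ball y ρ) := fun x hx =>
      (hball y hy).analyticAt_of_mem (by
        rw [EMetric.mem_ball]; exact edist_lt_ofReal.mpr (mem_ball.mp hx.2))
    exact h1.eqOn_of_preconnected_of_eventuallyEq (hAn.mono inter_subset_left)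
      hOconv.isPreconnected hyO ((hloc y hy).symm)
  -- consistency of the local extensions
  have hD : ∀ y ∈ V, ∀ y' ∈ V, ∀ x : EuclideanSpace ℝ (Fin d), dist x y < ρ → dist x y' < ρ → g y x = g y' x := by
    intro y hy y' hy' x h1 h2
    set m := midpoint ℝ y y' with hm
    have hmV : m ∈ V := hVconv.segment_subset hy hy' (midpoint_mem_segment y y')
    have hdyy : dist y y' < 2 * ρ := by
      calc dist y y' ≤ dist y x + dist x y' := dist_triangle y x y'
        _ < ρ + ρ := by rw [dist_comm y x]; exact add_lt_add h1 h2
        _ = 2 * ρ := by ring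
    have hdyy2 : dist y' y < 2 * ρ := by rw [dist_comm]; exact hdyy
    have hmy : dist m y < ρ := by
      rw [hm, dist_midpoint_left]
      simp only [Real.norm_ofNat]
      rw [dist_comm y y']
      linarith
    have hmy' : dist m y' < ρ := by
      rw [hm, dist_midpoint_right]
      simp only [Real.norm_ofNat]
      linarith
    have hOopen : IsOpen (ball y ρ ∩ ball y' ρ) := isOpen_ball.inter isOpen_ball
    have hOconv : Convex ℝ (ball y ρ ∩ ball y' ρ) := (convex_ball y ρ).inter (convex_ball y' ρ)
    have hmO : m ∈ ball y ρ ∩ ball y' ρ := ⟨mem_ball.mpr hmy, mem_ball.mpr hmy'⟩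
    have hxO : x ∈ ball y ρ ∩ ball y' ρ := ⟨mem_ball.mpr h1, mem_ball.mpr h2⟩
    have hgy : AnalyticOnNhd ℝ (g y) (ball y ρ ∩ ball y' ρ) := fun z hz =>
      (hball y hy).analyticAt_of_mem (by
        rw [EMetric.mem_ball]; exact edist_lt_ofReal.mpr (mem_ball.mp hz.1))
    have hgy' : AnalyticOnNhd ℝ (g y') (ball y ρ ∩ ball y' ρ) := fun z hz =>
      (hball y' hy').analyticAt_of_mem (by
        rw [EMetric.mem_ball]; exact edist_lt_ofReal.mpr (mem_ball.mp hz.2))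
    have hev : g y =ᶠ[nhds m] g y' := by
      filter_upwards [hVopen.mem_nhds hmV, isOpen_ball.mem_nhds (mem_ball.mpr hmy),
        isOpen_ball.mem_nhds (mem_ball.mpr hmy')] with z hzV hzy hzy'
      rw [hCC y hy ⟨hzV, hzy⟩, hCC y' hy' ⟨hzV, hzy'⟩]
    exact hgy.eqOn_of_preconnected_of_eventuallyEq hgy' hOconv.isPreconnected hmO hev hxO
  -- the global extension
  set G : EuclideanSpace ℝ (Fin d) → ℝ := fun x => if h : ∃ y, y ∈ V ∧ dist x y < ρ then g h.choose x else 0 with hGdef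
  have hGeq : ∀ y₀ ∈ V, ∀ x : EuclideanSpace ℝ (Fin d), dist x y₀ < ρ → G x = g y₀ x := by
    intro y₀ hy₀ x hx
    have hex : ∃ y, y ∈ V ∧ dist x y < ρ := ⟨y₀, hy₀, hx⟩
    rw [hGdef]
    simp only
    rw [dif_pos hex]
    exact hD hex.choose hex.choose_spec.1 y₀ hy₀ x hex.choose_spec.2 hx
  refine ⟨G, ?_, ?_⟩
  · intro x₀ hx₀
    rw [mem_setOf_eq] at hx₀
    obtain ⟨y₀, hy₀V, hy₀d⟩ := (infDist_lt_iff hVne).mp hx₀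
    have hA : AnalyticAt ℝ (g y₀) x₀ := (hball y₀ hy₀V).analyticAt_of_mem (by
      rw [EMetric.mem_ball]; exact edist_lt_ofReal.mpr hy₀d)
    apply hA.congr
    filter_upwards [isOpen_ball.mem_nhds (mem_ball.mpr hy₀d)] with x hx
    exact (hGeq y₀ hy₀V x (mem_ball.mp hx)).symm
  · intro x hx
    have hxx : dist x x < ρ := by simpa using hρ
    rw [hGeq x hx x hxx]
    exact hCC x hx ⟨hx, mem_ball_self hρ⟩
end
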